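/- Let G be a finite simple graph, let z ≥ 0 be an integer, let (C₁,F₁) be a z-antler in G, and let (C₂,F₂) be an antler in G. Then (C₁ \ (C₂ ∪ F₂), F₁ \ (C₂ ∪ F₂)) is a z-antler in the graph G − (C₂ ∪ F₂). -/

import Mathlib

variable {V : Type*}

/-- The subgraph of `G` with edges restricted to the vertex set `S`
(kept on the same vertex type; vertices outside `S` become isolated).
Used to model the induced subgraph `G[S]` and vertex deletion `G - X = G[Xᶜ]`. -/
def graphRestrict (G : SimpleGraph V) (S : Set V) : SimpleGraph V where
  Adj u v := G.Adj u v ∧ u ∈ S ∧ v ∈ S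
  symm := ⟨fun _ _ h => ⟨h.1.symm, h.2.2, h.2.1⟩⟩
  loopless := ⟨fun v h => G.loopless.irrefl v h.1⟩

/-- `X` is a feedback vertex set of `G`: deleting `X` leaves an acyclic graph. -/
def IsFVS (G : SimpleGraph V) (X : Set V) : Prop :=
  (graphRestrict G Xᶜ).IsAcyclic

/-- The feedback vertex number of `G`: the minimum size of a feedback vertex set. -/
noncomputable def fvs (G : SimpleGraph V) : ℕ :=
  sInf {n | ∃ X : Set V, IsFVS G X ∧ X.ncard = n}

/-- `X` is a minimum feedback vertex set of `G`. -/
def IsMinFVS (G : SimpleGraph V) (X : Set V) : Prop :=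
  IsFVS G X ∧ ∀ Y : Set V, IsFVS G Y → X.ncard ≤ Y.ncard

/-- `(C, F)` is a feedback vertex cut in `G`: `C` and `F` are disjoint, `G[F]` is a
forest, and every tree of `G[F]` has at most one edge to `V(G) \ (C ∪ F)` (i.e. any two
edges from the same component of `G[F]` to the outside coincide). -/
def IsFVC (G : SimpleGraph V) (C F : Set V) : Prop :=
  Disjoint C F ∧ (graphRestrict G F).IsAcyclic ∧
    ∀ u₁ u₂ w₁ w₂ : V, u₁ ∈ F → u₂ ∈ F →
      (graphRestrict G F).Reachable u₁ u₂ →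
      w₁ ∉ C ∪ F → w₂ ∉ C ∪ F → G.Adj u₁ w₁ → G.Adj u₂ w₂ →
      u₁ = u₂ ∧ w₁ = w₂

/-- `(C, F)` is an antler in `G`: a feedback vertex cut with `|C| ≤ fvs(G[C ∪ F])`. -/
def IsAntler (G : SimpleGraph V) (C F : Set V) : Prop :=
  IsFVC G C F ∧ C.ncard ≤ fvs (graphRestrict G (C ∪ F))

/-- A graph `H` together with a vertex set `C` "has order `z`" if every connected
component `H'` of `H` satisfies `fvs(H') = |C ∩ V(H')| ≤ z`. -/
def HasCertOrder {W : Type*} (H : SimpleGraph W) (C : Set W) (z : ℕ) : Prop :=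
  ∀ v : W,
    fvs (graphRestrict H {u | H.Reachable u v}) = (C ∩ {u | H.Reachable u v}).ncard ∧
    (C ∩ {u | H.Reachable u v}).ncard ≤ z

/-- `H` is a `C`-certificate in `G`: a subgraph of `G` for which `C` is a minimum
feedback vertex set. -/
def IsCCertificate (G : SimpleGraph V) (C : Set V) (H : G.Subgraph) : Prop :=
  C ⊆ H.verts ∧ IsMinFVS H.coe {u : H.verts | (u : V) ∈ C}

/-- `H` is a `C`-certificate of order `z` in `G`. -/
def IsCCertificateOfOrder (G : SimpleGraph V) (C : Set V) (H : G.Subgraph) (z : ℕ) : Prop :=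
  IsCCertificate G C H ∧ HasCertOrder H.coe {u : H.verts | (u : V) ∈ C} z

/-- `(C, F)` is a `z`-antler in `G`: an antler such that `G[C ∪ F]` contains a
`C`-certificate of order `z`. -/
def IsZAntler (G : SimpleGraph V) (z : ℕ) (C F : Set V) : Prop :=
  IsAntler G C F ∧ ∃ H : G.Subgraph, H.verts ⊆ C ∪ F ∧ IsCCertificateOfOrder G C H z

/-- The function `f_r(x) = 2x³ + 3x² - x`. -/
def fr (x : ℕ) : ℕ := 2 * x ^ 3 + 3 * x ^ 2 - x

/-- A feedback vertex cut `(C, F)` is reducible if `|F| > f_r(|C|)`. -/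
def IsReducibleFVC (G : SimpleGraph V) (C F : Set V) : Prop :=
  IsFVC G C F ∧ fr C.ncard < F.ncard

/-- A feedback vertex cut `(C, F)` is simple if `|F| ≤ 2 f_r(|C|)` and either
`G[F]` is connected, or all trees of `G[F]` have a common neighbor `v` and there is a
single-tree feedback vertex cut `(C, F₂)` with `v ∈ F₂ \ F` and `F ⊆ F₂`. -/
def IsSimpleFVC (G : SimpleGraph V) (C F : Set V) : Prop :=
  IsFVC G C F ∧ F.ncard ≤ 2 * fr C.ncard ∧
    ((G.induce F).Connected ∨
      ∃ v : V,
        (∀ u ∈ F, ∃ u' ∈ F, (graphRestrict G F).Reachable u u' ∧ G.Adj u' v) ∧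
        ∃ F₂ : Set V, IsFVC G C F₂ ∧ (G.induce F₂).Connected ∧ v ∈ F₂ \ F ∧ F ⊆ F₂)

/-- `G` contains a `v`-flower of order `k`: `k` cycles whose vertex sets pairwise
intersect exactly in `{v}`. -/
def HasFlower (G : SimpleGraph V) (v : V) (k : ℕ) : Prop :=
  ∃ c : Fin k → G.Walk v v,
    (∀ i, (c i).IsCycle) ∧
    ∀ i j, i ≠ j → {x | x ∈ (c i).support} ∩ {x | x ∈ (c j).support} = {v}

/-- `G` contains `k` pairwise vertex-disjoint cycles. -/
def HasDisjointCycles (G : SimpleGraph V) (k : ℕ) : Prop :=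
  ∃ (b : Fin k → V) (c : ∀ i, G.Walk (b i) (b i)),
    (∀ i, (c i).IsCycle) ∧
    ∀ i j, i ≠ j → Disjoint {x | x ∈ (c i).support} {x | x ∈ (c j).support}

/-- `(C, F)` is a 1-antler in `G` (self-contained definition): `G[F]` is a forest,
every tree of `G[F]` has at most one edge to `V(G) \ (C ∪ F)`, and `G[C ∪ F]`
contains `|C|` pairwise vertex-disjoint cycles. -/
def IsOneAntler (G : SimpleGraph V) (C F : Set V) : Prop :=
  IsFVC G C F ∧ HasDisjointCycles (graphRestrict G (C ∪ F)) C.ncard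

/-- `C 1, F 1, …, C ℓ, F ℓ` is a `z`-antler-sequence for `G`: the sets are pairwise
disjoint and each `(C i, F i)` is a `z`-antler in `G` minus all earlier sets. -/
def IsAntlerSeq (G : SimpleGraph V) (z ℓ : ℕ) (C F : Fin ℓ → Set V) : Prop :=
  (∀ i j, i ≠ j → Disjoint (C i) (C j)) ∧
  (∀ i j, i ≠ j → Disjoint (F i) (F j)) ∧
  (∀ i j, Disjoint (C i) (F j)) ∧
  ∀ i, IsZAntler (graphRestrict G (⋃ j, ⋃ (_ : j < i), (C j ∪ F j))ᶜ) z (C i) (F i)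

/-!
Let `X = C₂ ∪ F₂` and let `H` be the `C₁`-certificate. In a feedback vertex cut `(C, F)` a cycle
avoiding `C` avoids `F` as well. Hence `(C₂ \ F₁) ∪ (C₁ ∩ F₂)` is a feedback vertex set of `G[X]`,
and since `(C₂, F₂)` is an antler, `|C₂ ∩ (C₁ ∪ F₁)| ≤ |C₁ ∩ X|`. Every cycle of `H` through `X`
meets `C₂ ∩ (C₁ ∪ F₁)`, so a feedback vertex set `S` of `H - X` gives the feedback vertex set
`S ∪ (C₂ ∩ (C₁ ∪ F₁))` of `H`, and minimality of `C₁` yields `|C₁ \ X| ≤ |S|`. Thus `H - X` is a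
`(C₁ \ X)`-certificate, and its order is at most that of `H`.
-/

open SimpleGraph Set

section Cycles

variable {G : SimpleGraph V}

lemma SimpleGraph.Walk.IsCycle.mem_of_mem_support {S : Set V} (hS : ∀ ⦃u w⦄, G.Adj u w → u ∈ S)
    {v x : V} {c : G.Walk v v} (hc : c.IsCycle) (hx : x ∈ c.support) : x ∈ S := by
  obtain ⟨e, he, hxe⟩ := (Walk.mem_support_iff_exists_mem_edges_of_not_nil hc.not_nil).1 hx
  induction e with
  | h a b =>
    rcases Sym2.mem_iff.1 hxe with rfl | rfl
    · exact hS (c.adj_of_mem_edges he)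
    · exact hS (c.adj_of_mem_edges he).symm

lemma graphRestrict_le (S : Set V) : graphRestrict G S ≤ G := fun _ _ h => h.1

lemma graphRestrict_graphRestrict (S T : Set V) :
    graphRestrict (graphRestrict G S) T = graphRestrict G (S ∩ T) := by
  ext u w
  simp only [graphRestrict, mem_inter_iff]
  tauto

lemma isAcyclic_graphRestrict_iff {S : Set V} :
    (graphRestrict G S).IsAcyclic ↔
      ∀ ⦃v⦄ (c : G.Walk v v), c.IsCycle → ∃ x ∈ c.support, x ∉ S := by
  refine ⟨fun h v c hc => ?_, fun h v c hc => ?_⟩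
  · by_contra! hS
    have hedges : ∀ e ∈ c.edges, e ∈ (graphRestrict G S).edgeSet := by
      intro e he
      induction e with
      | h a b =>
        exact ⟨c.adj_of_mem_edges he, hS a (c.fst_mem_support_of_mem_edges he),
          hS b (c.snd_mem_support_of_mem_edges he)⟩
    exact h _ (hc.transfer hedges)
  · obtain ⟨x, hx, hxS⟩ := h _ (hc.mapLe (graphRestrict_le S))
    rw [Walk.support_mapLe_eq_support] at hx
    exact hxS (hc.mem_of_mem_support (fun _ _ (h : (graphRestrict G S).Adj _ _) => h.2.1) hx)

lemma isFVS_iff {Y : Set V} :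
    IsFVS G Y ↔ ∀ ⦃v⦄ (c : G.Walk v v), c.IsCycle → ∃ x ∈ c.support, x ∈ Y := by
  simp only [IsFVS, isAcyclic_graphRestrict_iff, notMem_compl_iff]

lemma isFVS_graphRestrict_iff {S Y : Set V} :
    IsFVS (graphRestrict G S) Y ↔
      ∀ ⦃v⦄ (c : G.Walk v v), c.IsCycle → ∃ x ∈ c.support, x ∉ S ∨ x ∈ Y := by
  simp only [IsFVS, graphRestrict_graphRestrict, isAcyclic_graphRestrict_iff, mem_inter_iff,
    notMem_compl_iff, not_and_or]

lemma IsFVS.anti {K : SimpleGraph V} {Y : Set V} (hY : IsFVS G Y) (hKG : K ≤ G) : IsFVS K Y :=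
  IsAcyclic.anti (G := graphRestrict K Yᶜ) (G' := graphRestrict G Yᶜ)
    (fun _ _ h => ⟨hKG h.1, h.2⟩) hY

lemma isFVS_univ : IsFVS G univ :=
  isFVS_iff.2 fun _ c _ => ⟨_, c.start_mem_support, trivial⟩

lemma fvs_le_ncard {Y : Set V} (hY : IsFVS G Y) : fvs G ≤ Y.ncard :=
  Nat.sInf_le ⟨Y, hY, rfl⟩

lemma le_fvs {n : ℕ} (h : ∀ Y, IsFVS G Y → n ≤ Y.ncard) : n ≤ fvs G :=
  le_csInf ⟨_, univ, isFVS_univ, rfl⟩ fun _ ⟨Y, hY, hn⟩ => hn ▸ h Y hY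

lemma IsMinFVS.ncard_le_fvs_of_le {K : SimpleGraph V} {C : Set V} (hC : IsMinFVS K C)
    (hKG : K ≤ G) : C.ncard ≤ fvs G :=
  le_fvs fun Y hY => hC.2 Y (hY.anti hKG)

end Cycles

section FeedbackVertexCut

variable {G : SimpleGraph V} {C F : Set V}

lemma SimpleGraph.Walk.exists_mem_edges_of_mem_of_notMem {S : Set V} :
    ∀ {a b : V} (p : G.Walk a b), a ∈ S → b ∉ S →
      ∃ u w, u ∈ S ∧ w ∉ S ∧ (graphRestrict G S).Reachable a u ∧ s(u, w) ∈ p.edges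
  | _, _, .nil, ha, hb => absurd ha hb
  | a, _, .cons (v := d) h q, ha, hb => by
    by_cases hd : d ∈ S
    · obtain ⟨u, w, hu, hw, hdu, hq⟩ := q.exists_mem_edges_of_mem_of_notMem hd hb
      have had : (graphRestrict G S).Adj a d := ⟨h, ha, hd⟩
      exact ⟨u, w, hu, hw, had.reachable.trans hdu, List.mem_cons_of_mem _ hq⟩
    · exact ⟨a, d, ha, hd, .rfl, List.mem_cons_self⟩

/-- A trail that avoids `C` and enters `F` would have to leave the tree it entered through the
very edge it came in by. -/
lemma IsFVC.notMem_of_isTrail (hF : IsFVC G C F) :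
    ∀ {a b : V} (p : G.Walk a b), p.IsTrail → (∀ x ∈ p.support, x ∉ C) → a ∉ F → b ∉ F →
      ∀ x ∈ p.support, x ∉ F
  | _, _, .nil, _, _, ha, _, x, hx => by rwa [List.mem_singleton.1 hx]
  | a, _, .cons (v := d) h q, hp, hC, ha, hb, x, hx => by
    rw [Walk.isTrail_cons] at hp
    have hCq : ∀ y ∈ q.support, y ∉ C := fun y hy => hC y (List.mem_cons_of_mem _ hy)
    by_cases hd : d ∈ F
    · obtain ⟨u, w, hu, hw, hdu, hq⟩ := q.exists_mem_edges_of_mem_of_notMem hd hb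
      have haCF : a ∉ C ∪ F := fun h' => h'.elim (hC a List.mem_cons_self) ha
      have hwCF : w ∉ C ∪ F := fun h' => h'.elim (hCq w (q.snd_mem_support_of_mem_edges hq)) hw
      obtain ⟨rfl, rfl⟩ := hF.2.2 d u a w hd hu hdu haCF hwCF h.symm (q.adj_of_mem_edges hq)
      exact absurd (Sym2.eq_swap ▸ hq) hp.2
    · rcases List.mem_cons.1 hx with rfl | hx
      · exact ha
      · exact hF.notMem_of_isTrail q hp.1 hCq hd hb x hx

lemma IsFVC.notMem_of_isCycle (hF : IsFVC G C F) {v : V} {c : G.Walk v v} (hc : c.IsCycle)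
    (hC : ∀ x ∈ c.support, x ∉ C) : ∀ x ∈ c.support, x ∉ F := by
  classical
  obtain ⟨y, hy, hyF⟩ := isAcyclic_graphRestrict_iff.1 hF.2.1 c hc
  simpa using hF.notMem_of_isTrail (c.rotate y hy) ((Walk.isTrail_rotate hy).2 hc.isTrail)
    (by simpa using hC) hyF hyF

lemma IsFVC.notMem_union_of_isCycle {K : SimpleGraph V} {W : Set V} (hF : IsFVC G C F)
    (hKG : K ≤ G) (hKW : ∀ ⦃u w⦄, K.Adj u w → u ∈ W) {v : V} {c : K.Walk v v}
    (hc : c.IsCycle) (hC : ∀ x ∈ c.support, x ∉ C ∩ W) : ∀ x ∈ c.support, x ∉ C ∪ F := by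
  have hC' : ∀ x ∈ c.support, x ∉ C := fun x hx hxC => hC x hx ⟨hxC, hc.mem_of_mem_support hKW hx⟩
  have hF' := hF.notMem_of_isCycle (hc.mapLe hKG) (by simpa using hC')
  simp only [Walk.support_mapLe_eq_support] at hF'
  exact fun x hx h => h.elim (hC' x hx) (hF' x hx)

lemma IsFVC.graphRestrict_compl (hF : IsFVC G C F) (X : Set V) :
    IsFVC (graphRestrict G Xᶜ) (C \ X) (F \ X) := by
  have hle : graphRestrict (graphRestrict G Xᶜ) (F \ X) ≤ graphRestrict G F :=
    fun _ _ h => ⟨h.1.1, h.2.1.1, h.2.2.1⟩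
  refine ⟨hF.1.mono sdiff_subset sdiff_subset, hF.2.1.anti hle, ?_⟩
  intro u₁ u₂ w₁ w₂ hu₁ hu₂ hu₁₂ hw₁ hw₂ h₁ h₂
  have hCF : ∀ w, w ∉ C \ X ∪ F \ X → w ∈ Xᶜ → w ∉ C ∪ F := fun w hw hwX h =>
    hw (h.imp (⟨·, hwX⟩) (⟨·, hwX⟩))
  exact hF.2.2 u₁ u₂ w₁ w₂ hu₁.1 hu₂.1 (hu₁₂.mono hle)
    (hCF w₁ hw₁ h₁.2.2) (hCF w₂ hw₂ h₂.2.2) h₁.1 h₂.1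

end FeedbackVertexCut

section Counting

variable [Finite V] {G : SimpleGraph V}

/-- `(C₂ \ F₁) ∪ (C₁ ∩ F₂)` is a feedback vertex set of `G[C₂ ∪ F₂]`, so the antler property
bounds `|C₂|` by its size. -/
lemma IsAntler.ncard_inter_union_le {C₁ F₁ C₂ F₂ : Set V} (h₁ : IsFVC G C₁ F₁)
    (h₂ : IsAntler G C₂ F₂) : (C₂ ∩ (C₁ ∪ F₁)).ncard ≤ (C₁ ∩ (C₂ ∪ F₂)).ncard := by
  have hM : IsFVS (graphRestrict G (C₂ ∪ F₂)) ((C₂ \ F₁) ∪ (C₁ ∩ F₂)) := by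
    refine isFVS_graphRestrict_iff.2 fun v c hc => ?_
    by_contra! h
    have hC₁ : ∀ x ∈ c.support, x ∉ C₁ := fun x hx hxC₁ => by
      obtain ⟨hxX, hxM⟩ := h x hx
      have hxC₂ : x ∈ C₂ := hxX.resolve_right fun hxF₂ => hxM (Or.inr ⟨hxC₁, hxF₂⟩)
      exact h₁.1.notMem_of_mem_left hxC₁ (by_contra fun hxF₁ => hxM (Or.inl ⟨hxC₂, hxF₁⟩))
    have hC₂ : ∀ x ∈ c.support, x ∉ C₂ := fun x hx hxC₂ =>
      h₁.notMem_of_isCycle hc hC₁ x hx (by_contra fun hxF₁ => (h x hx).2 (Or.inl ⟨hxC₂, hxF₁⟩))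
    exact ((h v c.start_mem_support).1.resolve_left (hC₂ v c.start_mem_support))
      |> h₂.1.notMem_of_isCycle hc hC₂ v c.start_mem_support
  have hfvs : C₂.ncard ≤ (C₂ \ F₁).ncard + (C₁ ∩ F₂).ncard :=
    h₂.2.trans ((fvs_le_ncard hM).trans (ncard_union_le _ _))
  have hsplit : (C₂ ∩ F₁).ncard + (C₂ \ F₁).ncard = C₂.ncard :=
    ncard_inter_add_ncard_sdiff_eq_ncard _ _
  have hleft : (C₂ ∩ (C₁ ∪ F₁)).ncard ≤ (C₁ ∩ C₂).ncard + (C₂ ∩ F₁).ncard := by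
    rw [inter_union_distrib_left, inter_comm C₂ C₁]
    exact ncard_union_le _ _
  have hright : (C₁ ∩ (C₂ ∪ F₂)).ncard = (C₁ ∩ C₂).ncard + (C₁ ∩ F₂).ncard := by
    rw [inter_union_distrib_left]
    exact ncard_union_eq (h₂.1.1.mono inter_subset_right inter_subset_right)
  omega

/-- A feedback vertex set `S` of `K - X` extends to the feedback vertex set `S ∪ Z` of `K`. -/
lemma IsMinFVS.graphRestrict_compl {K : SimpleGraph V} {C X Z : Set V} (hC : IsMinFVS K C)
    (hZ : ∀ ⦃v⦄ (c : K.Walk v v), c.IsCycle → (∀ x ∈ c.support, x ∉ Z) → ∀ x ∈ c.support, x ∉ X)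
    (hZC : Z.ncard ≤ (C ∩ X).ncard) : IsMinFVS (graphRestrict K Xᶜ) (C \ X) := by
  refine ⟨isFVS_graphRestrict_iff.2 fun v c hc => ?_, fun S hS => ?_⟩
  · obtain ⟨x, hx, hxC⟩ := isFVS_iff.1 hC.1 c hc
    by_cases hxX : x ∈ X
    · exact ⟨x, hx, Or.inl (notMem_compl_iff.2 hxX)⟩
    · exact ⟨x, hx, Or.inr ⟨hxC, hxX⟩⟩
  have hSZ : IsFVS K (S ∪ Z) := by
    refine isFVS_iff.2 fun v c hc => ?_
    by_cases hcZ : ∃ x ∈ c.support, x ∈ Z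
    · obtain ⟨x, hx, hxZ⟩ := hcZ
      exact ⟨x, hx, Or.inr hxZ⟩
    · push Not at hcZ
      obtain ⟨x, hx, hxX | hxS⟩ := isFVS_graphRestrict_iff.1 hS c hc
      · exact absurd (notMem_compl_iff.1 hxX) (hZ c hc hcZ x hx)
      · exact ⟨x, hx, Or.inl hxS⟩
  have hsplit : (C ∩ X).ncard + (C \ X).ncard = C.ncard := ncard_inter_add_ncard_sdiff_eq_ncard _ _
  have := (hC.2 _ hSZ).trans (ncard_union_le S Z)
  omega

/-- A cycle lies entirely inside or entirely outside a connected component. -/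
lemma IsMinFVS.fvs_graphRestrict_reachable {K : SimpleGraph V} {C : Set V} (hC : IsMinFVS K C)
    (v : V) :
    fvs (graphRestrict K {u | K.Reachable u v}) = (C ∩ {u | K.Reachable u v}).ncard := by
  classical
  set D := {u | K.Reachable u v}
  have hD : ∀ ⦃w x y : V⦄ (c : K.Walk w w), x ∈ c.support → y ∈ c.support → x ∈ D → y ∈ D :=
    fun w x y c hx hy hxD =>
      ((c.takeUntil y hy).reachable.symm.trans (c.takeUntil x hx).reachable).trans hxD
  refine le_antisymm (fvs_le_ncard (isFVS_graphRestrict_iff.2 fun w c hc => ?_))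
    (le_fvs fun Y hY => ?_)
  · obtain ⟨x, hx, hxC⟩ := isFVS_iff.1 hC.1 c hc
    by_cases hxD : x ∈ D
    · exact ⟨x, hx, Or.inr ⟨hxC, hxD⟩⟩
    · exact ⟨x, hx, Or.inl hxD⟩
  have hYC : IsFVS K ((Y ∩ D) ∪ (C \ D)) := by
    refine isFVS_iff.2 fun w c hc => ?_
    by_cases hcD : ∃ x ∈ c.support, x ∈ D
    · obtain ⟨x, hx, hxD⟩ := hcD
      obtain ⟨y, hy, hyD | hyY⟩ := isFVS_graphRestrict_iff.1 hY c hc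
      · exact absurd (hD c hx hy hxD) hyD
      · exact ⟨y, hy, Or.inl ⟨hyY, hD c hx hy hxD⟩⟩
    · push Not at hcD
      obtain ⟨x, hx, hxC⟩ := isFVS_iff.1 hC.1 c hc
      exact ⟨x, hx, Or.inr ⟨hxC, hcD x hx⟩⟩
  have hsplit : (C ∩ D).ncard + (C \ D).ncard = C.ncard := ncard_inter_add_ncard_sdiff_eq_ncard _ _
  have hY : (Y ∩ D).ncard ≤ Y.ncard := ncard_le_ncard inter_subset_left
  have := (hC.2 _ hYC).trans (ncard_union_le _ _)
  omega

end Counting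

section Subgraph

variable {G : SimpleGraph V}

lemma SimpleGraph.Subgraph.isFVS_coe_preimage_iff (K : G.Subgraph) (Y : Set V) :
    IsFVS K.coe (Subtype.val ⁻¹' Y) ↔ IsFVS K.spanningCoe Y := by
  rw [isFVS_iff, isFVS_iff]
  refine ⟨fun h v c hc => ?_, fun h v c hc => ?_⟩
  · have hK : ∀ x ∈ c.support, x ∈ K.verts :=
      fun x hx => hc.mem_of_mem_support (fun _ _ huw => K.edge_vert huw) hx
    have hc' : (c.induce K.verts hK).IsCycle := by
      rw [← Walk.isCycle_map_iff_of_injective (f := (Embedding.induce K.verts).toHom)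
        Subtype.val_injective, Walk.map_induce]
      exact hc
    obtain ⟨x, hx, hxY⟩ := h _ hc'
    replace hx : x ∈ (c.induce K.verts hK).support := hx
    rw [Walk.support_induce, List.mem_attachWith] at hx
    exact ⟨x, hx, hxY⟩
  · obtain ⟨x, hx, hxY⟩ := h _ ((Walk.isCycle_map_iff_of_injective
      (f := K.coeEmbeddingSpanningCoe.toHom) Subtype.val_injective).2 hc)
    obtain ⟨y, hy, rfl⟩ := List.mem_map.1 ((Walk.support_map _ _).symm ▸ hx)
    exact ⟨y, hy, hxY⟩

lemma SimpleGraph.Subgraph.isMinFVS_coe_preimage_iff [Finite V] (K : G.Subgraph) {C : Set V}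
    (hC : C ⊆ K.verts) : IsMinFVS K.coe (Subtype.val ⁻¹' C) ↔ IsMinFVS K.spanningCoe C := by
  rw [IsMinFVS, IsMinFVS, K.isFVS_coe_preimage_iff,
    ncard_preimage_of_injective_subset_range Subtype.val_injective (by simpa using hC)]
  refine and_congr_right fun _ => ⟨fun h Y hY => ?_, fun h Y hY => ?_⟩
  · refine (h _ ((K.isFVS_coe_preimage_iff Y).2 hY)).trans ?_
    rw [← ncard_image_of_injective _ Subtype.val_injective]
    exact ncard_le_ncard (image_preimage_subset _ _)
  · rw [← ncard_image_of_injective _ Subtype.val_injective]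
    refine h _ ((K.isFVS_coe_preimage_iff _).1 ?_)
    rwa [preimage_image_eq _ Subtype.val_injective]

lemma SimpleGraph.Subgraph.spanningCoe_le_graphRestrict (K : G.Subgraph) {S : Set V}
    (hS : K.verts ⊆ S) : K.spanningCoe ≤ graphRestrict G S :=
  fun _ _ h => ⟨K.adj_sub h, hS (K.edge_vert h), hS (K.edge_vert h.symm)⟩

def subgraphRestrict (K : G.Subgraph) (S : Set V) : (graphRestrict G S).Subgraph where
  verts := K.verts ∩ S
  Adj u w := K.Adj u w ∧ u ∈ S ∧ w ∈ S
  adj_sub h := ⟨K.adj_sub h.1, h.2⟩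
  edge_vert h := ⟨K.edge_vert h.1, h.2.1⟩
  symm := ⟨fun _ _ h => ⟨h.1.symm, h.2.2, h.2.1⟩⟩

lemma hasCertOrder_subgraphRestrict [Finite V] {K : G.Subgraph} {C C' S : Set V} {z : ℕ}
    (hK : HasCertOrder K.coe (Subtype.val ⁻¹' C) z)
    (hC' : IsMinFVS (subgraphRestrict K S).coe (Subtype.val ⁻¹' C')) (hC'C : C' ⊆ C) :
    HasCertOrder (subgraphRestrict K S).coe (Subtype.val ⁻¹' C') z := by
  intro v
  refine ⟨hC'.fvs_graphRestrict_reachable v, le_trans ?_ (hK ⟨v, v.2.1⟩).2⟩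
  let φ : (subgraphRestrict K S).coe →g K.coe := ⟨fun u => ⟨u, u.2.1⟩, fun h => h.1⟩
  exact ncard_le_ncard_of_injOn φ (fun u hu => ⟨hC'C hu.1, hu.2.map φ⟩)
    (fun _ _ _ _ h => Subtype.ext (congrArg Subtype.val h :))

end Subgraph

theorem stmt6 [Fintype V] (G : SimpleGraph V) (z : ℕ) (C₁ F₁ C₂ F₂ : Set V)
    (h₁ : IsZAntler G z C₁ F₁) (h₂ : IsAntler G C₂ F₂) :
    IsZAntler (graphRestrict G (C₂ ∪ F₂)ᶜ) z (C₁ \ (C₂ ∪ F₂)) (F₁ \ (C₂ ∪ F₂)) := by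
  obtain ⟨⟨hfvc₁, -⟩, H, hHCF, ⟨hC₁H, hmin⟩, horder⟩ := h₁
  set X := C₂ ∪ F₂
  have hmin' : IsMinFVS (graphRestrict H.spanningCoe Xᶜ) (C₁ \ X) :=
    ((H.isMinFVS_coe_preimage_iff hC₁H).1 hmin).graphRestrict_compl
      (fun _ _ hc hZ => h₂.1.notMem_union_of_isCycle H.spanningCoe_le
        (fun _ _ huw => hHCF (H.edge_vert huw)) hc hZ)
      (h₂.ncard_inter_union_le hfvc₁)
  have hH' : (subgraphRestrict H Xᶜ).verts ⊆ C₁ \ X ∪ F₁ \ X :=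
    fun x hx => union_sdiff_distrib ▸ ⟨hHCF hx.1, hx.2⟩
  have hC : C₁ \ X ⊆ (subgraphRestrict H Xᶜ).verts := fun x hx => ⟨hC₁H hx.1, hx.2⟩
  have hmin'' := ((subgraphRestrict H Xᶜ).isMinFVS_coe_preimage_iff hC).2 hmin'
  exact ⟨⟨hfvc₁.graphRestrict_compl X,
      hmin'.ncard_le_fvs_of_le ((subgraphRestrict H Xᶜ).spanningCoe_le_graphRestrict hH')⟩,
    subgraphRestrict H Xᶜ, hH', ⟨hC, hmin''⟩,
    hasCertOrder_subgraphRestrict horder hmin'' sdiff_subset⟩
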